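/- For any ε₁, ε₂ ∈ {0, 1}, the morphism F = g₁ + g₂ + ε₁·ψ + ε₂·(h₁ + h₂ + h₃ + h₄) ∈ Mor(B, D) satisfies (I_{A_p} ⊠ F)(α ⊗ x) = α ⊗ (e₁ + e₂) + Σ_{k=1}^{2} Σ_{i=0}^{p−2} β_{2p−i−2} ⊗ y³ₖ + ε₂ · Σ_{k=1}^{4} Σ_{i=0}^{p−2} β_{2p−i−2} ⊗ y⁴ₖ. (This is the algebraic content of the computation of the sum of the maps induced by the (p,1)-cables of the exotic concordances C and C′.) -/

import Mathlib

/-!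
We work over the field `F₂ = ZMod 2`.

The torus algebra `𝒜` is encoded as the 8-dimensional `F₂`-vector space
`Fin 8 → F₂` with basis indices
`0 = ι₀`, `1 = ι₁`, `2 = ρ₁`, `3 = ρ₂`, `4 = ρ₃`, `5 = ρ₁₂`, `6 = ρ₂₃`, `7 = ρ₁₂₃`,
and with the multiplication determined by the multiplication table `mulTable`
(rows/columns indexed by basis elements), which records that `ι₀, ι₁` are
orthogonal idempotents with `ι₀ + ι₁ = 1`, that
`ρ₁ = ι₀ρ₁ι₁`, `ρ₂ = ι₁ρ₂ι₀`, `ρ₃ = ι₀ρ₃ι₁`, `ρ₁₂ = ι₀ρ₁₂ι₀`, `ρ₂₃ = ι₁ρ₂₃ι₁`,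
`ρ₁₂₃ = ι₀ρ₁₂₃ι₁`, and that the only nonzero products of `ρ`-elements are
`ρ₁ρ₂ = ρ₁₂`, `ρ₂ρ₃ = ρ₂₃`, `ρ₁ρ₂₃ = ρ₁₂₃`, `ρ₁₂ρ₃ = ρ₁₂₃`.
-/

/-- The ground field `F₂`. -/
abbrev F2 : Type := ZMod 2

/-- The torus algebra as an `F₂`-vector space. -/
abbrev Alg : Type := Fin 8 → F2

/-- The `i`-th basis vector of the torus algebra. -/
def bv (i : Fin 8) : Alg := Pi.single i 1

/-- The multiplication table of the torus algebra on basis elements: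
entry `(i, j)` is the product of the `i`-th and `j`-th basis elements. -/
def mulTable : Fin 8 → Fin 8 → Alg :=
  ![![bv 0, 0, bv 2, 0, bv 4, bv 5, 0, bv 7],
    ![0, bv 1, 0, bv 3, 0, 0, bv 6, 0],
    ![0, bv 2, 0, bv 5, 0, 0, bv 7, 0],
    ![bv 3, 0, 0, 0, bv 6, 0, 0, 0],
    ![0, bv 4, 0, 0, 0, 0, 0, 0],
    ![bv 5, 0, 0, 0, bv 7, 0, 0, 0],
    ![0, bv 6, 0, 0, 0, 0, 0, 0],
    ![0, bv 7, 0, 0, 0, 0, 0, 0]]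

/-- The multiplication `μ : 𝒜 ⊗ 𝒜 → 𝒜` of the torus algebra, as a bilinear
operation extended from the multiplication table. -/
def algMul (x y : Alg) : Alg := fun k => ∑ i, ∑ j, x i * y j * mulTable i j k
/-- The type-D structure `B`: a single generator `x` (the unique element of `Unit`)
lying in the idempotent `ι₀`, with `δ¹(x) = ρ₁₂ ⊗ x`.  `deltaB s t` is the
`𝒜`-coefficient of `t` in `δ¹(s)`. -/
def deltaB : Unit → Unit → Alg := fun _ _ => bv 5

/-- The idempotent of the generator of `B`. -/
def idemB : Unit → Fin 2 := fun _ => 0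
/-- The type-D structure `C`, with basis indexed by `Fin 8`:
`0 = a`, `1 = b`, `2 = c`, `3 = e`, `4 = y¹`, `5 = y²`, `6 = y³`, `7 = y⁴`.
`deltaC s t` is the `𝒜`-coefficient of `t` in `δ¹(s)`; the differentials are
`δ¹(a) = ρ₃ ⊗ y¹ + ρ₁ ⊗ y⁴`, `δ¹(y¹) = ρ₂ ⊗ b`, `δ¹(b) = ρ₁ ⊗ y²`,
`δ¹(c) = ρ₃ ⊗ y³ + ρ₁₂₃ ⊗ y⁴`, `δ¹(y³) = ρ₂ ⊗ e`, `δ¹(e) = ρ₁₂₃ ⊗ y²`,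
`δ¹(y²) = δ¹(y⁴) = 0`. -/
def deltaC : Fin 8 → Fin 8 → Alg :=
  ![![0, 0, 0, 0, bv 4, 0, 0, bv 2],
    ![0, 0, 0, 0, 0, bv 2, 0, 0],
    ![0, 0, 0, 0, 0, 0, bv 4, bv 7],
    ![0, 0, 0, 0, 0, bv 7, 0, 0],
    ![0, bv 3, 0, 0, 0, 0, 0, 0],
    ![0, 0, 0, 0, 0, 0, 0, 0],
    ![0, 0, 0, bv 3, 0, 0, 0, 0],
    ![0, 0, 0, 0, 0, 0, 0, 0]]

/-- The idempotents of the generators of `C`: `a, b, c, e ∈ ι₀C` and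
`y¹, y², y³, y⁴ ∈ ι₁C`. -/
def idemC : Fin 8 → Fin 2 := fun g => if (g : ℕ) < 4 then 0 else 1
/-- The basis of the type-D structure `D = B ⊕ C⁽¹⁾ ⊕ C⁽²⁾ ⊕ C⁽³⁾ ⊕ C⁽⁴⁾`:
`Sum.inl ()` is the generator `x` of `B`, and `Sum.inr (k, g)` is the generator
`g` of the `k`-th copy of `C`. -/
abbrev SD : Type := Unit ⊕ Fin 4 × Fin 8

/-- The differential of `D` (block diagonal). -/
def deltaD : SD → SD → Alg
  | Sum.inl _, Sum.inl _ => bv 5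
  | Sum.inr (k, g), Sum.inr (k', g') => if k = k' then deltaC g g' else 0
  | _, _ => 0

/-- The idempotents of the generators of `D`. -/
def idemD : SD → Fin 2
  | Sum.inl _ => 0
  | Sum.inr (_, g) => idemC g
/-- The last vertex of a path: `lastNode s [t₁, …, t_j] = t_j` (or `s` if the
path is empty). -/
def lastNode {S : Type} : S → List S → S
  | s, [] => s
  | _, t :: ts => lastNode t ts

/-- The list of `𝒜`-coefficients read along a path: for `δʲ`, the term
`a₁ ⊗ ⋯ ⊗ a_j ⊗ t_j` appearing in `δʲ(s)` corresponding to the path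
`s → t₁ → ⋯ → t_j` has `chain δ s [t₁, …, t_j] = [δ(s,t₁), δ(t₁,t₂), …]`. -/
def chain {S : Type} (δ : S → S → Alg) : S → List S → List Alg
  | _, [] => []
  | s, t :: ts => δ s t :: chain δ t ts

/-- Helper: multilinear coefficient of the pattern `ρ₂₃, …, ρ₂₃, ρ₂`:
the product of the `ρ₂₃`-coefficients of all but the last entry with the
`ρ₂`-coefficient of the last entry. -/
def tail23 : List Alg → F2
  | [] => 0
  | [a] => a 3
  | a :: as => a 6 * tail23 as
/-- The product of the `k`-th coefficients of the entries of a list. -/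
def prodAt (k : Fin 8) (l : List Alg) : F2 := (l.map fun a => a k).prod

/-- The `k`-th coefficient of the last entry of a list (`0` for the empty list). -/
def lastC (k : Fin 8) (l : List Alg) : F2 := (l.getLast?.map fun a => a k).getD 0

/-- The `k`-th coefficient of the `j`-th entry of a list (`0` if out of range). -/
def getC (k : Fin 8) (l : List Alg) (j : ℕ) : F2 := (l[j]?.map fun a => a k).getD 0

open Polynomial in
/-- The `A∞`-operations of the module `A_p = CFA⁻(𝓗_p)` associated to the
`(p,1)`-cable pattern, with generators `α` (encoded as `none`) and
`β₁, …, β_{2p−2}` (encoded as `some i` with `βₖ ↦ some (k-1)`), extended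
multilinearly: `mcoefAp p as g` is the `F₂[U]`-coefficient
(`U = Polynomial.X`) of the generator `g` in `m_{1 + as.length}(α, as)`.
The only nonzero operations with first input `α` are strict unitality
`m₂(α, ι₀) = α` together with:
* `m_{3+j}(α, ρ₃, ρ₂₃, …, ρ₂₃, ρ₂) = U^{p(j+1)} ⬝ α` (with `j ≥ 0` copies of `ρ₂₃`);
* `m_{2+i}(α, ρ₁₂, …, ρ₁₂, ρ₁) = β_{2p−i−2}` (with `0 ≤ i ≤ p−2` copies of `ρ₁₂`);
* `m_{4+i+j}(α, ρ₃, ρ₂₃, …, ρ₂₃, ρ₂, ρ₁₂, …, ρ₁₂, ρ₁) = U^{pj+i+1} ⬝ β_{i+1}`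
  (with `j ≥ 0` copies of `ρ₂₃` and `0 ≤ i ≤ p−2` copies of `ρ₁₂`). -/
noncomputable def mcoefAp (p : ℕ) (as : List Alg) : Option (Fin (2 * p - 2)) → Polynomial F2
  | none =>
      match as with
      | [] => 0
      | [a] => C (a 0)
      | a :: rest => C (a 4 * tail23 rest) * X ^ (p * rest.length)
  | some i =>
      (if as.length ≤ p - 1 ∧ (i : ℕ) = 2 * p - as.length - 2 then
        C (prodAt 5 as.dropLast * lastC 2 as) else 0) +
      (match as with
       | [] => 0
       | a :: rest =>
          if (i : ℕ) ≤ p - 2 ∧ (i : ℕ) + 3 ≤ as.length then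
            C (a 4 * prodAt 6 (rest.take (as.length - 3 - (i : ℕ))) *
                getC 3 rest (as.length - 3 - (i : ℕ)) *
                prodAt 5 ((rest.drop (as.length - 3 - (i : ℕ) + 1)).dropLast) *
                lastC 2 rest) *
              X ^ (p * (as.length - 3 - (i : ℕ)) + (i : ℕ) + 1)
          else 0)

/-- The box tensor product `(I_{A_p} ⊠ f)(α ⊗ n)` of the identity of the
`A∞`-module `A_p` with a morphism `f ∈ Mor(N, N′)` of type-D structures, as an
element of `A_p ⊗ N′` (a function assigning to each pair `(g, u)` — a generator
`g` of `A_p` and a basis element `u` of `N′` — the `F₂[U]`-coefficient of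
`g ⊗ u`):
`(I_{A_p} ⊠ f)(α ⊗ n) = Σ_{j,l ≥ 0} m_{j+l+2}(α, a₁, …, a_j, b, c₁, …, c_l) ⊗ n″`,
summed over all terms `a₁ ⊗ ⋯ ⊗ a_j ⊗ n′` appearing in `δʲ(n)` (paths `P.1`
in `N`), `b ⊗ m′` appearing in `f(n′)` (the intermediate basis element `t`),
and `c₁ ⊗ ⋯ ⊗ c_l ⊗ n″` appearing in `δˡ(m′)` (paths `P.2` in `N′`). -/
noncomputable def boxAp (p : ℕ) {S T : Type} [Fintype T] [DecidableEq T]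
    (δN : S → S → Alg) (δM : T → T → Alg) (f : S → T → Alg) (n : S) :
    Option (Fin (2 * p - 2)) × T → Polynomial F2 :=
  fun gu => ∑ᶠ P : List S × List T, ∑ t : T,
    if lastNode t P.2 = gu.2 then
      mcoefAp p (chain δN n P.1 ++ f (lastNode n P.1) t :: chain δM t P.2) gu.1
    else 0
/-- The morphism `ψ = (x ↦ ρ₁₂ ⊗ x) ∈ Mor(B, D)`. -/
def psiD : Unit → SD → Alg := fun _ t => if t = Sum.inl () then bv 5 else 0

/-- The morphism `gₖ = (x ↦ ι₀ ⊗ eₖ + ρ₃ ⊗ y²ₖ + ρ₁ ⊗ y³ₖ) ∈ Mor(B, D)`. -/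
def gDMat (k : Fin 4) : Unit → SD → Alg := fun _ t =>
  if t = Sum.inr (k, 3) then bv 0
  else if t = Sum.inr (k, 5) then bv 4
  else if t = Sum.inr (k, 6) then bv 2
  else 0

/-- The morphism `hₖ = (x ↦ ρ₁ ⊗ y⁴ₖ) ∈ Mor(B, D)`. -/
def hDMat (k : Fin 4) : Unit → SD → Alg := fun _ t =>
  if t = Sum.inr (k, 7) then bv 2 else 0
open Polynomial

lemma tail23_zero : ∀ (l : List Alg), (0:Alg) ∈ l → tail23 l = 0
  | [a], h => by
      obtain rfl : a = 0 := (List.mem_singleton.1 h).symm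
      simp [tail23]
  | a :: b :: l, h => by
      rcases List.mem_cons.1 h with h | h
      · obtain rfl : a = 0 := h.symm
        simp [tail23]
      · simp [tail23, tail23_zero _ h]

lemma prodAt_zero (k : Fin 8) {l : List Alg} (h : (0:Alg) ∈ l) : prodAt k l = 0 :=
  List.prod_eq_zero (List.mem_map.2 ⟨0, h, rfl⟩)

lemma lastC_concat (k : Fin 8) (l : List Alg) (a : Alg) : lastC k (l ++ [a]) = a k := by
  simp [lastC]

lemma mcoef_zero (p : ℕ) {L : List Alg} (h : (0:Alg) ∈ L) (g : Option (Fin (2*p-2))) :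
    mcoefAp p L g = 0 := by
  have hne : L ≠ [] := List.ne_nil_of_mem h
  cases g with
  | none =>
    rcases L with _ | ⟨a, _ | ⟨b, l⟩⟩
    · simp at h
    · obtain rfl : a = 0 := (List.mem_singleton.1 h).symm
      simp [mcoefAp]
    · rcases List.mem_cons.1 h with h | h
      · obtain rfl : a = 0 := h.symm
        simp [mcoefAp]
      · simp [mcoefAp, tail23_zero _ h]
  | some i =>
    have hp1 : prodAt 5 L.dropLast * lastC 2 L = 0 := by
      have h' : (0:Alg) ∈ L.dropLast ++ [L.getLast hne] := by
        rw [List.dropLast_concat_getLast hne]; exact h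
      rcases List.mem_append.1 h' with h1 | h1
      · rw [prodAt_zero _ h1, zero_mul]
      · have h2 : L.getLast hne = 0 := (List.mem_singleton.1 h1).symm
        have h3 : L.getLast? = some (0:Alg) := by rw [List.getLast?_eq_getLast hne, h2]
        simp [lastC, h3]
    rcases L with _ | ⟨a, rest⟩
    · simp at h
    · rcases List.mem_cons.1 h with ha | hrest
      · obtain rfl : a = 0 := ha.symm
        simp [mcoefAp, hp1]
      · simp only [mcoefAp, hp1, map_zero, ite_self, zero_add]
        split_ifs with hc
        · obtain ⟨hc1, hc2⟩ := hc
          set n := (a :: rest).length - 3 - (i:ℕ) with hn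
          have hnr : n + 2 ≤ rest.length := by
            simp only [List.length_cons] at hc2 hn ⊢; omega
          obtain ⟨m, hm, hm0⟩ := List.mem_iff_getElem.1 hrest
          rcases lt_trichotomy m n with hmn | hmn | hmn
          · have hmem : (0:Alg) ∈ rest.take n := by
              rw [List.mem_iff_getElem]
              refine ⟨m, by simp [List.length_take, lt_min_iff]; omega, ?_⟩
              rw [List.getElem_take]; exact hm0
            simp [prodAt_zero 6 hmem]
          · subst hmn
            have h0 : getC 3 rest n = 0 := by
              simp [getC, List.getElem?_eq_getElem hm, hm0]
            simp [h0]
          · have hms : (0:Alg) ∈ rest.drop (n+1) := by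
              rw [List.mem_iff_getElem?]
              refine ⟨m - (n+1), ?_⟩
              rw [List.getElem?_drop, show n+1 + (m - (n+1)) = m by omega,
                List.getElem?_eq_getElem hm, hm0]
            have hsne : rest.drop (n+1) ≠ [] := List.ne_nil_of_mem hms
            have h' : (0:Alg) ∈ (rest.drop (n+1)).dropLast ++ [(rest.drop (n+1)).getLast hsne] := by
              rw [List.dropLast_concat_getLast hsne]; exact hms
            rcases List.mem_append.1 h' with h1 | h1
            · simp [prodAt_zero 5 h1]
            · have h2 : (rest.drop (n+1)).getLast hsne = 0 := (List.mem_singleton.1 h1).symm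
              have h3 : rest.getLast? = some (0:Alg) := by
                conv_lhs => rw [← List.take_append_drop (n+1) rest]
                rw [List.getLast?_append, List.getLast?_eq_getLast hsne, h2]
                rfl
              have h4 : lastC 2 rest = 0 := by simp [lastC, h3]
              simp [h4]
        · rfl

lemma mcoef_zero_of_coords (p : ℕ) {L : List Alg}
    (h : ∀ a ∈ L, a 0 = 0 ∧ a 2 = 0 ∧ a 4 = 0) (g : Option (Fin (2*p-2))) :
    mcoefAp p L g = 0 := by
  have hlast : lastC 2 L = 0 := by
    rcases List.eq_nil_or_concat L with rfl | ⟨l', a, rfl⟩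
    · simp [lastC]
    · rw [List.concat_eq_append, lastC_concat]
      exact (h a (by simp)).2.1
  cases g with
  | none =>
    rcases L with _ | ⟨a, _ | ⟨b, l⟩⟩
    · simp [mcoefAp]
    · simp [mcoefAp, (h a (by simp)).1]
    · simp [mcoefAp, (h a (by simp)).2.2]
  | some i =>
    rcases L with _ | ⟨a, rest⟩
    · simp [mcoefAp, lastC]
    · simp [mcoefAp, hlast, (h a (by simp)).2.2]

lemma mcoef_zero_of_four (p : ℕ) {L : List Alg} (h2 : 2 ≤ L.length)
    (h4 : ∀ a ∈ L, a 4 = 0) (hl : lastC 2 L = 0) (g : Option (Fin (2*p-2))) :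
    mcoefAp p L g = 0 := by
  rcases L with _ | ⟨a, _ | ⟨b, l⟩⟩
  · simp at h2
  · simp at h2
  · cases g with
    | none => simp [mcoefAp, h4 a (by simp)]
    | some i => simp [mcoefAp, hl, h4 a (by simp)]
lemma bv00 : (bv 0) 0 = 1 := by decide
lemma bv02 : (bv 0) 2 = 0 := by decide
lemma bv20 : (bv 2) 0 = 0 := by decide
lemma bv22 : (bv 2) 2 = 1 := by decide
lemma bv40 : (bv 4) 0 = 0 := by decide
lemma bv42 : (bv 4) 2 = 0 := by decide
lemma bv50 : (bv 5) 0 = 0 := by decide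
lemma bv52 : (bv 5) 2 = 0 := by decide
lemma prodAt_repl5 (j : ℕ) : prodAt 5 (List.replicate j (bv 5)) = 1 := by
  simp [prodAt, List.map_replicate, List.prod_replicate,
    show (bv 5) 5 = 1 from by decide]

lemma mcoef_repl (p j : ℕ) (v : Alg) (g : Option (Fin (2*p-2))) :
    mcoefAp p (List.replicate j (bv 5) ++ [v]) g =
      match g with
      | none => if j = 0 then Polynomial.C (v 0) else 0
      | some i => if j + 1 ≤ p - 1 ∧ (i : ℕ) = 2 * p - (j+1) - 2
          then Polynomial.C (v 2) else 0 := by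
  have hb4 : (bv 5) 4 = 0 := by decide
  cases g with
  | none =>
    cases j with
    | zero => simp [mcoefAp]
    | succ j =>
      rw [List.replicate_succ, List.cons_append]
      obtain ⟨c, t, ht⟩ : ∃ c t, List.replicate j (bv 5) ++ [v] = c :: t := by
        cases j with
        | zero => exact ⟨v, [], rfl⟩
        | succ j => exact ⟨bv 5, _, by rw [List.replicate_succ, List.cons_append]⟩
      rw [ht]
      simp [mcoefAp, hb4]
  | some i =>
    have hlen : (List.replicate j (bv 5) ++ [v]).length = j + 1 := by simp
    have h1 : prodAt 5 (List.replicate j (bv 5) ++ [v]).dropLast = 1 := by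
      rw [List.dropLast_concat, prodAt_repl5]
    have h2 : lastC 2 (List.replicate j (bv 5) ++ [v]) = v 2 := lastC_concat _ _ _
    cases j with
    | zero =>
      have hno : ¬((i:ℕ) ≤ p - 2 ∧ (i:ℕ) + 3 ≤ ([v] : List Alg).length) := by
        rintro ⟨-, h2⟩
        rw [List.length_singleton] at h2
        omega
      have h1' : prodAt 5 ([] : List Alg) = 1 := by simp [prodAt]
      have h2' : lastC 2 [v] = v 2 := by simp [lastC]
      simp [mcoefAp, hno, h1', h2']
    | succ j =>
      have key : mcoefAp p (List.replicate (j+1) (bv 5) ++ [v]) (some i) =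
          (if (List.replicate (j+1) (bv 5) ++ [v]).length ≤ p - 1 ∧
              (i : ℕ) = 2 * p - (List.replicate (j+1) (bv 5) ++ [v]).length - 2 then
            Polynomial.C (prodAt 5 (List.replicate (j+1) (bv 5) ++ [v]).dropLast *
              lastC 2 (List.replicate (j+1) (bv 5) ++ [v])) else 0) + 0 := by
        rw [List.replicate_succ, List.cons_append]
        simp only [mcoefAp, hb4, zero_mul, map_zero]
        norm_num
      rw [key, h1, h2, hlen]
      simp
lemma chainB_eq : ∀ (u : Unit) (l : List Unit), chain deltaB u l = List.replicate l.length (bv 5)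
  | _, [] => rfl
  | _, t :: ts => by
      rw [chain, chainB_eq t ts]
      simp [deltaB, List.replicate_succ]

lemma d5 : ∀ (k : Fin 4) (u : SD), deltaD (Sum.inr (k, 5)) u = 0 := by decide
lemma d7 : ∀ (k : Fin 4) (u : SD), deltaD (Sum.inr (k, 7)) u = 0 := by decide
lemma d3 : ∀ (k : Fin 4) (u : SD), deltaD (Sum.inr (k, 3)) u
    = if u = Sum.inr (k, 5) then bv 7 else 0 := by decide
lemma d6 : ∀ (k : Fin 4) (u : SD), deltaD (Sum.inr (k, 6)) u
    = if u = Sum.inr (k, 3) then bv 3 else 0 := by decide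

lemma chain_inl : ∀ (l2 : List SD), (0:Alg) ∈ chain deltaD (Sum.inl ()) l2 ∨
    chain deltaD (Sum.inl ()) l2 = List.replicate l2.length (bv 5)
  | [] => Or.inr rfl
  | (Sum.inl u) :: r => by
      cases u
      rcases chain_inl r with h | h
      · exact Or.inl (by rw [chain]; exact List.mem_cons_of_mem _ h)
      · exact Or.inr (by rw [chain, h]; rfl)
  | (Sum.inr x) :: r => by
      left
      rw [chain]
      exact List.mem_cons_self

/-- value table of the morphism `F`. -/
def vF (ε₁ ε₂ : F2) : SD → Alg
  | Sum.inl _ => ε₁ • bv 5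
  | Sum.inr (k, g') =>
      if ((k : ℕ) < 2) ∧ g' = 3 then bv 0
      else if ((k : ℕ) < 2) ∧ g' = 5 then bv 4
      else if ((k : ℕ) < 2) ∧ g' = 6 then bv 2
      else if g' = 7 then ε₂ • bv 2
      else 0

lemma Fval (ε₁ ε₂ : F2) (u : SD) :
    (gDMat 0 + gDMat 1 + ε₁ • psiD + ε₂ • (hDMat 0 + hDMat 1 + hDMat 2 + hDMat 3)) () u
      = vF ε₁ ε₂ u := by
  rcases u with ⟨⟩ | ⟨k, g'⟩
  · simp [gDMat, psiD, hDMat, vF]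
  · fin_cases k <;> fin_cases g' <;>
      simp (config := { decide := true }) [gDMat, psiD, hDMat, vF]
lemma lastC_concat2 (k : Fin 8) (l : List Alg) (a b : Alg) :
    lastC k (l ++ [a, b]) = b k := by
  rw [show l ++ [a, b] = (l ++ [a]) ++ [b] by simp, lastC_concat]

lemma lastC_concat3 (k : Fin 8) (l : List Alg) (a b c : Alg) :
    lastC k (l ++ [a, b, c]) = c k := by
  rw [show l ++ [a, b, c] = (l ++ [a, b]) ++ [c] by simp, lastC_concat]

lemma Zterm (p : ℕ) (ε₁ ε₂ : F2) (j : ℕ) (t : SD) (l2 : List SD) (hl2 : l2 ≠ [])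
    (g : Option (Fin (2*p-2))) :
    mcoefAp p (List.replicate j (bv 5) ++ vF ε₁ ε₂ t :: chain deltaD t l2) g = 0 := by
  rcases t with ⟨⟩ | ⟨k, g'⟩
  · rcases chain_inl l2 with h | h
    · exact mcoef_zero p (List.mem_append_right _ (List.mem_cons_of_mem _ h)) g
    · rw [h]
      apply mcoef_zero_of_coords
      intro a ha
      rcases List.mem_append.1 ha with ha | ha
      · obtain rfl := List.eq_of_mem_replicate ha; refine ⟨by decide, by decide, by decide⟩
      · rcases List.mem_cons.1 ha with rfl | ha
        · refine ⟨?_, ?_, ?_⟩ <;>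
            simp [vF, Pi.smul_apply, show (bv 5) 0 = 0 from by decide,
              show (bv 5) 2 = 0 from by decide, show (bv 5) 4 = 0 from by decide]
        · obtain rfl := List.eq_of_mem_replicate ha; refine ⟨by decide, by decide, by decide⟩
  · obtain ⟨u, l2', rfl⟩ := List.exists_cons_of_ne_nil hl2
    rw [chain]
    by_cases hg3 : g' = 3
    · subst hg3
      by_cases hk : (k : ℕ) < 2
      · have hv : vF ε₁ ε₂ (Sum.inr (k, 3)) = bv 0 := by
          simp (config := { decide := true }) [vF, hk]
        by_cases hu : u = Sum.inr (k, 5)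
        · subst hu
          have harrow : deltaD (Sum.inr (k, 3)) (Sum.inr (k, 5)) = bv 7 := by
            rw [d3, if_pos rfl]
          rcases l2' with _ | ⟨u', l2''⟩
          · rw [show chain deltaD (Sum.inr (k, 5) : SD) [] = [] from rfl, hv, harrow]
            apply mcoef_zero_of_four
            · simp
            · intro a ha
              rcases List.mem_append.1 ha with ha | ha
              · obtain rfl := List.eq_of_mem_replicate ha; decide
              · simp at ha; rcases ha with rfl | rfl <;> decide
            · rw [show List.replicate j (bv 5) ++ [bv 0, bv 7] =
                List.replicate j (bv 5) ++ [bv 0, bv 7] from rfl, lastC_concat2]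
              decide
          · apply mcoef_zero
            rw [chain, d5]
            exact List.mem_append_right _ (List.mem_cons_of_mem _
              (List.mem_cons_of_mem _ (List.mem_cons_self)))
        · apply mcoef_zero
          rw [d3, if_neg hu]
          exact List.mem_append_right _ (List.mem_cons_of_mem _ (List.mem_cons_self))
      · have hv : vF ε₁ ε₂ (Sum.inr (k, 3)) = 0 := by
          simp (config := { decide := true }) [vF, hk]
        exact mcoef_zero p (List.mem_append_right _ (List.mem_cons.2 (Or.inl hv.symm))) g
    · by_cases hg5 : g' = 5
      · subst hg5
        apply mcoef_zero
        rw [d5]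
        exact List.mem_append_right _ (List.mem_cons_of_mem _ (List.mem_cons_self))
      · by_cases hg7 : g' = 7
        · subst hg7
          apply mcoef_zero
          rw [d7]
          exact List.mem_append_right _ (List.mem_cons_of_mem _ (List.mem_cons_self))
        · by_cases hg6 : g' = 6
          · subst hg6
            by_cases hk : (k : ℕ) < 2
            · have hv : vF ε₁ ε₂ (Sum.inr (k, 6)) = bv 2 := by
                simp (config := { decide := true }) [vF, hk]
              by_cases hu : u = Sum.inr (k, 3)
              · subst hu
                have harrow : deltaD (Sum.inr (k, 6)) (Sum.inr (k, 3)) = bv 3 := by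
                  rw [d6, if_pos rfl]
                rcases l2' with _ | ⟨u', l2''⟩
                · rw [show chain deltaD (Sum.inr (k, 3) : SD) [] = [] from rfl, hv, harrow]
                  apply mcoef_zero_of_four
                  · simp
                  · intro a ha
                    rcases List.mem_append.1 ha with ha | ha
                    · obtain rfl := List.eq_of_mem_replicate ha; decide
                    · simp at ha; rcases ha with rfl | rfl <;> decide
                  · rw [lastC_concat2]; decide
                · by_cases hu' : u' = Sum.inr (k, 5)
                  · subst hu'
                    have harrow2 : deltaD (Sum.inr (k, 3)) (Sum.inr (k, 5)) = bv 7 := by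
                      rw [d3, if_pos rfl]
                    rcases l2'' with _ | ⟨u'', l2'''⟩
                    · rw [chain, show chain deltaD (Sum.inr (k, 5) : SD) [] = [] from rfl,
                        hv, harrow, harrow2]
                      apply mcoef_zero_of_four
                      · simp
                      · intro a ha
                        rcases List.mem_append.1 ha with ha | ha
                        · obtain rfl := List.eq_of_mem_replicate ha; decide
                        · simp at ha; rcases ha with rfl | rfl | rfl <;> decide
                      · rw [lastC_concat3]; decide
                    · apply mcoef_zero
                      rw [chain, chain, d5]
                      exact List.mem_append_right _ (List.mem_cons_of_mem _
                        (List.mem_cons_of_mem _ (List.mem_cons_of_mem _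
                          (List.mem_cons_self))))
                  · apply mcoef_zero
                    rw [chain, d3, if_neg hu']
                    exact List.mem_append_right _ (List.mem_cons_of_mem _
                      (List.mem_cons_of_mem _ (List.mem_cons_self)))
              · apply mcoef_zero
                rw [d6, if_neg hu]
                exact List.mem_append_right _ (List.mem_cons_of_mem _ (List.mem_cons_self))
            · have hv : vF ε₁ ε₂ (Sum.inr (k, 6)) = 0 := by
                simp (config := { decide := true }) [vF, hk]
              exact mcoef_zero p (List.mem_append_right _ (List.mem_cons.2 (Or.inl hv.symm))) g
          · have hv : vF ε₁ ε₂ (Sum.inr (k, g')) = 0 := by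
              simp [vF, hg3, hg5, hg6, hg7]
            exact mcoef_zero p (List.mem_append_right _ (List.mem_cons.2 (Or.inl hv.symm))) g
lemma box_eval (p : ℕ) (hp : 2 ≤ p) (ε₁ ε₂ : F2) (g : Option (Fin (2*p-2))) (u : SD) :
    boxAp p deltaB deltaD
      (gDMat 0 + gDMat 1 + ε₁ • psiD + ε₂ • (hDMat 0 + hDMat 1 + hDMat 2 + hDMat 3)) () (g, u)
      = ∑ j ∈ Finset.range (p-1), mcoefAp p (List.replicate j (bv 5) ++ [vF ε₁ ε₂ u]) g := by
  show (∑ᶠ P : List Unit × List SD, ∑ t : SD,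
      if lastNode t P.2 = u then
        mcoefAp p (chain deltaB () P.1 ++
          (gDMat 0 + gDMat 1 + ε₁ • psiD + ε₂ • (hDMat 0 + hDMat 1 + hDMat 2 + hDMat 3))
            (lastNode () P.1) t :: chain deltaD t P.2) g
      else 0) = _
  have hterm : ∀ (l1 : List Unit) (t : SD) (l2 : List SD),
      mcoefAp p (chain deltaB () l1 ++
          (gDMat 0 + gDMat 1 + ε₁ • psiD + ε₂ • (hDMat 0 + hDMat 1 + hDMat 2 + hDMat 3))
            (lastNode () l1) t :: chain deltaD t l2) g
        = mcoefAp p (List.replicate l1.length (bv 5) ++ vF ε₁ ε₂ t :: chain deltaD t l2) g := by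
    intro l1 t l2
    rw [chainB_eq, show lastNode () l1 = () from rfl, Fval]
  have hsub : (Function.support fun P : List Unit × List SD => ∑ t : SD,
      if lastNode t P.2 = u then
        mcoefAp p (chain deltaB () P.1 ++
          (gDMat 0 + gDMat 1 + ε₁ • psiD + ε₂ • (hDMat 0 + hDMat 1 + hDMat 2 + hDMat 3))
            (lastNode () P.1) t :: chain deltaD t P.2) g
      else 0)
      ⊆ ↑((Finset.range (p-1)).image fun j => (List.replicate j (), ([] : List SD))) := by
    rintro ⟨l1, l2⟩ hP
    simp only [Function.mem_support] at hP
    by_contra hmem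
    apply hP
    rcases l2 with _ | ⟨w, l2'⟩
    · have hl1 : l1 = List.replicate l1.length () := List.eq_replicate_of_mem (fun b _ => rfl)
      have hlen : ¬ l1.length < p - 1 := by
        intro hlt
        exact hmem (by
          simp only [Finset.coe_image, Set.mem_image, Finset.mem_coe, Finset.mem_range]
          exact ⟨l1.length, hlt, by rw [← hl1]⟩)
      apply Finset.sum_eq_zero
      intro t _
      split
      · rw [hterm, show chain deltaD t [] = [] from rfl, mcoef_repl]
        rcases g with _ | i
        · exact if_neg (by omega)
        · exact if_neg (by rintro ⟨h1, -⟩; omega)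
      · rfl
    · apply Finset.sum_eq_zero
      intro t _
      split
      · rw [hterm]; exact Zterm p ε₁ ε₂ _ t _ (by simp) g
      · rfl
  rw [finsum_eq_sum_of_support_subset _ hsub]
  rw [Finset.sum_image (by
    intro a _ b _ hab
    simpa using congrArg (fun q : List Unit × List SD => q.1.length) hab)]
  refine Finset.sum_congr rfl fun j hj => ?_
  have hstep : ∀ t : SD,
      (if lastNode t (List.replicate j (), ([] : List SD)).2 = u then
        mcoefAp p (chain deltaB () (List.replicate j (), ([] : List SD)).1 ++
          (gDMat 0 + gDMat 1 + ε₁ • psiD + ε₂ • (hDMat 0 + hDMat 1 + hDMat 2 + hDMat 3))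
            (lastNode () (List.replicate j (), ([] : List SD)).1) t ::
              chain deltaD t (List.replicate j (), ([] : List SD)).2) g
      else 0)
      = if t = u then mcoefAp p (List.replicate j (bv 5) ++ [vF ε₁ ε₂ t]) g else 0 := by
    intro t
    show (if t = u then
        mcoefAp p (chain deltaB () (List.replicate j ()) ++
          (gDMat 0 + gDMat 1 + ε₁ • psiD + ε₂ • (hDMat 0 + hDMat 1 + hDMat 2 + hDMat 3))
            () t :: chain deltaD t []) g
      else 0) = _
    rw [chainB_eq, Fval, List.length_replicate]
    rfl
  rw [Finset.sum_congr rfl fun t _ => hstep t, Finset.sum_ite_eq' Finset.univ u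
    (fun t => mcoefAp p (List.replicate j (bv 5) ++ [vF ε₁ ε₂ t]) g),
    if_pos (Finset.mem_univ u)]
set_option maxHeartbeats 1000000 in
/-- For `p ≥ 2` and any `ε₁, ε₂ ∈ F₂ = {0, 1}`, the morphism
`F = g₁ + g₂ + ε₁·ψ + ε₂·(h₁ + h₂ + h₃ + h₄) ∈ Mor(B, D)` satisfies
`(I_{A_p} ⊠ F)(α ⊗ x) = α ⊗ (e₁ + e₂) + Σ_{k=1}^{2} Σ_{i=0}^{p−2} β_{2p−i−2} ⊗ y³ₖ
  + ε₂ · Σ_{k=1}^{4} Σ_{i=0}^{p−2} β_{2p−i−2} ⊗ y⁴ₖ`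
(recall `β_{2p−i−2}` is encoded as `some ⟨2p−i−3, _⟩`, `eₖ` as `Sum.inr (k-1, 3)`,
`y³ₖ` as `Sum.inr (k-1, 6)` and `y⁴ₖ` as `Sum.inr (k-1, 7)`). -/
theorem statement11 (p : ℕ) (hp : 2 ≤ p) (ε₁ ε₂ : F2) :
    boxAp p deltaB deltaD
      (gDMat 0 + gDMat 1 + ε₁ • psiD + ε₂ • (hDMat 0 + hDMat 1 + hDMat 2 + hDMat 3)) () =
      Pi.single ((none : Option (Fin (2 * p - 2))), (Sum.inr (0, 3) : SD)) 1 +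
      Pi.single ((none : Option (Fin (2 * p - 2))), (Sum.inr (1, 3) : SD)) 1 +
      ∑ i ∈ Finset.range (p - 1),
        (Pi.single ((some ⟨2 * p - i - 3, by omega⟩ : Option (Fin (2 * p - 2))),
            (Sum.inr (0, 6) : SD)) 1 +
         Pi.single ((some ⟨2 * p - i - 3, by omega⟩ : Option (Fin (2 * p - 2))),
            (Sum.inr (1, 6) : SD)) 1) +
      ε₂ • ∑ i ∈ Finset.range (p - 1),
        (Pi.single ((some ⟨2 * p - i - 3, by omega⟩ : Option (Fin (2 * p - 2))),
            (Sum.inr (0, 7) : SD)) 1 +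
         Pi.single ((some ⟨2 * p - i - 3, by omega⟩ : Option (Fin (2 * p - 2))),
            (Sum.inr (1, 7) : SD)) 1 +
         Pi.single ((some ⟨2 * p - i - 3, by omega⟩ : Option (Fin (2 * p - 2))),
            (Sum.inr (2, 7) : SD)) 1 +
         Pi.single ((some ⟨2 * p - i - 3, by omega⟩ : Option (Fin (2 * p - 2))),
            (Sum.inr (3, 7) : SD)) 1) := by
  funext gu
  obtain ⟨g, u⟩ := gu
  rw [box_eval p hp ε₁ ε₂ g u]
  rcases g with _ | i
  · simp only [mcoef_repl]
    rw [Finset.sum_ite_eq' (Finset.range (p-1)) 0 (fun _ => Polynomial.C (vF ε₁ ε₂ u 0)),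
      if_pos (Finset.mem_range.2 (by omega))]
    simp only [Pi.add_apply, Finset.sum_apply, Pi.smul_apply, Pi.single_apply]
    rcases u with ⟨⟩ | ⟨k, g'⟩
    · simp [vF, Pi.smul_apply, bv50]
    · fin_cases k <;> fin_cases g' <;>
        simp (config := { decide := true }) [vF, Pi.smul_apply, bv00, bv20, bv40]
  · simp only [mcoef_repl]
    rw [show (∑ j ∈ Finset.range (p-1),
        if j + 1 ≤ p - 1 ∧ (i:ℕ) = 2*p-(j+1)-2 then Polynomial.C (vF ε₁ ε₂ u 2) else 0)
      = ∑ j ∈ Finset.range (p-1),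
        if (i:ℕ) = 2*p-j-3 then Polynomial.C (vF ε₁ ε₂ u 2) else 0 from
      Finset.sum_congr rfl fun j hj => by
        rw [Finset.mem_range] at hj
        have h1 : (j + 1 ≤ p - 1 ∧ (i:ℕ) = 2*p-(j+1)-2) ↔ ((i:ℕ) = 2*p-j-3) := by
          rw [show 2*p-(j+1)-2 = 2*p-j-3 from by omega]
          exact and_iff_right (by omega)
        simp only [h1]]
    simp only [Pi.add_apply, Finset.sum_apply, Pi.smul_apply, Pi.single_apply,
      Prod.mk.injEq, Option.some.injEq]
    rcases u with ⟨⟩ | ⟨k, g'⟩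
    · simp [vF, Pi.smul_apply, bv52]
    · fin_cases k <;> fin_cases g' <;>
        simp (config := { decide := true }) [vF, Pi.smul_apply, Finset.smul_sum, smul_ite,
          Polynomial.smul_eq_C_mul, Fin.ext_iff, Fin.val_mk, bv02, bv22, bv42] <;>
        · rw [← Finset.sum_boole, Finset.mul_sum]
          exact Finset.sum_congr rfl fun x _ => by split <;> simp
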